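/- If two first-order terms are unifiable, then they have a most general unifier: a unifier θ such that any other unifier of the two terms factors as an instance of θ. -/

import Mathlib

/-- First-order terms over natural-number symbols: variables and applications. -/
inductive Tm : Type
  | var : ℕ → Tm
  | app : ℕ → List Tm → Tm

namespace Tm

/-- Apply a substitution (map from variables to terms) homomorphically. -/
def subst (σ : ℕ → Tm) : Tm → Tm
  | var x => σ x
  | app f ts => app f (ts.attach.map fun ⟨t, _⟩ => subst σ t)

/-- List of variables occurring in a term. -/
def varsL : Tm → List ℕ
  | var x => [x]
  | app _ ts => ts.attach.flatMap fun ⟨t, _⟩ => varsL t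

/-- Height of a term: maximal distance from the root to a subterm. -/
def height : Tm → ℕ
  | var _ => 0
  | app _ ts => (ts.attach.map fun ⟨t, _⟩ => height t + 1).foldr max 0

/-- Heights of the occurrences of the variable `x` in a term. -/
def occs (x : ℕ) : Tm → List ℕ
  | var y => if y = x then [0] else []
  | app _ ts => ts.attach.flatMap fun ⟨t, _⟩ => (occs x t).map (· + 1)

/-- Symbols occurring in a term, together with the arity they are used with. -/
def symar : Tm → List (ℕ × ℕ)
  | var _ => []
  | app f ts => (f, ts.length) :: ts.attach.flatMap fun ⟨t, _⟩ => symar t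

end Tm

open Tm

/-- Set of variables of a term. -/
def tvars (t : Tm) : Set ℕ := {x | x ∈ t.varsL}

/-- A term is closed when it has no variables. -/
def Closed (t : Tm) : Prop := t.varsL = []

/-- A substitution is finitary when it is the identity on all but finitely many variables. -/
def Finitary (σ : ℕ → Tm) : Prop := {x | σ x ≠ .var x}.Finite

/-- `σ` unifies `t` and `u`. -/
def Unifies (σ : ℕ → Tm) (t u : Tm) : Prop := subst σ t = subst σ u

/-- `θ` is a most general unifier of `t` and `u`: a (finitary) unifier such that
any other finitary unifier factors as an instance of it. -/
def IsMGU (θ : ℕ → Tm) (t u : Tm) : Prop :=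
  Finitary θ ∧ Unifies θ t u ∧
    ∀ σ, Finitary σ → Unifies σ t u → ∃ ρ, Finitary ρ ∧ ∀ x, σ x = subst ρ (θ x)

/-- Renaming of a term along a bijection of variables. -/
def rename (π : ℕ ≃ ℕ) (t : Tm) : Tm := subst (fun x => .var (π x)) t

/-- A flow is (the data of) a pair of terms `head ⊸ body`. -/
abbrev UFlow := Tm × Tm

/-- The flow condition: the variables of the head occur in the body. -/
def IsFlow (f : UFlow) : Prop := tvars f.1 ⊆ tvars f.2

/-- Equality of flows up to (simultaneous, bijective) renaming of variables. -/
def FlowEquiv (f g : UFlow) : Prop :=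
  ∃ π : ℕ ≃ ℕ, rename π f.1 = g.1 ∧ rename π f.2 = g.2

/-- Variables of a flow. -/
def flowVars (f : UFlow) : Set ℕ := tvars f.1 ∪ tvars f.2

/-- `h` is a product of the flows `f = u ⊸ v` and `g = t ⊸ w`: choosing representatives
with disjoint variables, `h = uθ ⊸ wθ` for `θ` a most general unifier of `v` and `t`. -/
def IsProd (f g h : UFlow) : Prop :=
  ∃ f' g' θ, FlowEquiv f f' ∧ FlowEquiv g g' ∧ flowVars f' ∩ flowVars g' = ∅ ∧
    IsMGU θ f'.2 g'.1 ∧ h = (subst θ f'.1, subst θ g'.2)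

/-- A wiring: a set of flows (finite sets of flows are considered up to renaming,
so we model them as sets of representatives). -/
abbrev Wiring := Set UFlow

/-- Product of wirings: pointwise product of flows, where defined. -/
def wmul (F G : Wiring) : Wiring := {h | ∃ f ∈ F, ∃ g ∈ G, IsProd f g h}

/-- The unit wiring `I = x ⊸ x`. -/
def wI : Wiring := {f | FlowEquiv (.var 0, .var 0) f}

/-- Powers of a wiring. -/
def wpow (F : Wiring) : ℕ → Wiring
  | 0 => wI
  | n + 1 => wmul F (wpow F n)

/-- Equality of wirings up to renaming of each flow. -/
def WEq (F G : Wiring) : Prop :=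
  (∀ f ∈ F, ∃ g ∈ G, FlowEquiv f g) ∧ ∀ g ∈ G, ∃ f ∈ F, FlowEquiv f g

/-- A fact: a flow of the form `t ⊸ t` with `t` closed. -/
def IsFact (f : UFlow) : Prop := Closed f.1 ∧ f.2 = f.1

/-- Application of a wiring to (the fact associated with) a closed term:
the set of product flows. -/
def appF (F : Wiring) (t : Tm) : Set UFlow := {h | ∃ f ∈ F, IsProd f (t, t) h}

/-- Application of a wiring to a fact, keeping the facts produced. -/
def factApp (F : Wiring) (t : Tm) : Set Tm := {v | ∃ f ∈ F, IsProd f (t, t) (v, v)}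

/-- A wiring is deterministic if it produces at most one fact from any fact. -/
def Deterministic (F : Wiring) : Prop := ∀ t, Closed t → (appF F t).Subsingleton

/-- Two terms are matchable if renamings of them with disjoint variables are unifiable. -/
def Matchable (t u : Tm) : Prop :=
  ∃ (π π' : ℕ ≃ ℕ), tvars (rename π t) ∩ tvars (rename π' u) = ∅ ∧
    ∃ θ, Finitary θ ∧ Unifies θ (rename π t) (rename π' u)

/-- A flow is balanced if each variable has all its occurrences at the same height. -/
def BalancedF (f : UFlow) : Prop :=
  ∀ x, ∀ n ∈ occs x f.1 ++ occs x f.2, ∀ m ∈ occs x f.1 ++ occs x f.2, n = m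

/-- Height of a flow. -/
def heightF (f : UFlow) : ℕ := max f.1.height f.2.height

/-- A wiring is balanced if all its flows are. -/
def BalancedW (F : Wiring) : Prop := ∀ f ∈ F, BalancedF f

/-- Height of a wiring: maximal height of its flows. -/
noncomputable def heightW (F : Wiring) : ℕ := sSup (heightF '' F)

/-- The computation space of a wiring `F`: closed terms (identified with the
corresponding facts) of height at most `heightW F` built using only symbols
(with their arities) occurring in `F` and the constant `⋆` (symbol `0`). -/
noncomputable def compSpace (F : Wiring) : Set Tm :=
  {t | Closed t ∧ t.height ≤ heightW F ∧
    ∀ q ∈ t.symar, q = (0, 0) ∨ ∃ f ∈ F, q ∈ f.1.symar ++ f.2.symar}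

/-- Nilpotency of a wiring: some power is the empty wiring. -/
def Nilpotent (F : Wiring) : Prop := ∃ n, 0 < n ∧ wpow F n = ∅

/-- Edges of the computation graph of `F`: from `u` to `v` iff `v ∈ F u`. -/
noncomputable def Edge (F : Wiring) (u v : Tm) : Prop :=
  u ∈ compSpace F ∧ v ∈ compSpace F ∧ v ∈ factApp F u

/-- Acyclicity of the computation graph of `F`. -/
noncomputable def AcyclicCG (F : Wiring) : Prop :=
  ¬ ∃ n, 0 < n ∧ ∃ c : ℕ → Tm, (∀ i < n, Edge F (c i) (c (i + 1))) ∧ c n = c 0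

/-!
Run Robinson's unification algorithm on finite lists of equations: drop trivial equations
`x = x`, decompose an equation between two applications into equations between their
arguments, and solve `x = u` with `x ∉ u` by substituting `u` for `x` in the remaining
equations. Each step preserves the set of unifiers, and an mgu of the new problem gives one of
the old (for elimination, after precomposing with `x ↦ u`). The pair (number of variables,
total size) decreases lexicographically, and on a unifiable problem the algorithm never meets
a symbol clash or a failing occurs check.
-/

theorem List.map_eq_map_iff_zip {α β : Type*} {f : α → β} {l₁ l₂ : List α} :
    l₁.map f = l₂.map f ↔ l₁.length = l₂.length ∧ ∀ p ∈ l₁.zip l₂, f p.1 = f p.2 := by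
  rw [← List.forall₂_eq_eq_eq, List.forall₂_map_left_iff, List.forall₂_map_right_iff,
    List.forall₂_iff_zip]
  simp

namespace Tm

def size : Tm → ℕ
  | var _ => 1
  | app _ ts => 1 + (ts.attach.map fun ⟨t, _⟩ => size t).sum

@[simp] theorem subst_var (σ : ℕ → Tm) (x : ℕ) : subst σ (var x) = σ x := by
  rw [subst]

@[simp] theorem subst_app (σ : ℕ → Tm) (f : ℕ) (ts : List Tm) :
    subst σ (app f ts) = app f (ts.map (subst σ)) := by
  simp [subst]

@[simp] theorem varsL_var (x : ℕ) : varsL (var x) = [x] := by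
  rw [varsL]

@[simp] theorem varsL_app (f : ℕ) (ts : List Tm) : varsL (app f ts) = ts.flatMap varsL := by
  simp [varsL]

@[simp] theorem size_app (f : ℕ) (ts : List Tm) : size (app f ts) = 1 + (ts.map size).sum := by
  simp [size]

theorem size_pos (t : Tm) : 0 < size t := by
  cases t <;> simp [size]

theorem size_lt_size_app_of_mem {t : Tm} {ts : List Tm} (h : t ∈ ts) (f : ℕ) :
    size t < size (app f ts) := by
  have := List.le_sum_of_mem (List.mem_map_of_mem (f := size) h)
  rw [size_app]
  omega

theorem induction_on {P : Tm → Prop} (t : Tm) (var : ∀ x, P (var x))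
    (app : ∀ f ts, (∀ t ∈ ts, P t) → P (app f ts)) : P t :=
  match t with
  | .var x => var x
  | .app f ts => app f ts fun t _ => induction_on t var app

theorem subst_congr {σ τ : ℕ → Tm} {t : Tm} (h : ∀ y ∈ varsL t, σ y = τ y) :
    subst σ t = subst τ t := by
  induction t using induction_on with
  | var x => simpa using h x
  | app f ts ih =>
    simp only [subst_app, app.injEq, true_and]
    exact List.map_congr_left fun t ht =>
      ih t ht fun y hy => h y (by simpa using ⟨t, ht, hy⟩)

@[simp] theorem subst_var_eq_self (t : Tm) : subst var t = t := by
  induction t using induction_on with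
  | var x => simp
  | app f ts ih => simpa using List.map_congr_left ih

theorem subst_subst (σ τ : ℕ → Tm) (t : Tm) : subst σ (subst τ t) = subst (subst σ ∘ τ) t := by
  induction t using induction_on with
  | var x => simp
  | app f ts ih => simpa using List.map_congr_left ih

theorem mem_varsL_subst {σ : ℕ → Tm} {t : Tm} {y : ℕ} :
    y ∈ varsL (subst σ t) ↔ ∃ z ∈ varsL t, y ∈ varsL (σ z) := by
  induction t using induction_on with
  | var x => simp
  | app f ts ih =>
    simp only [subst_app, varsL_app, List.flatMap_map, List.mem_flatMap]
    aesop

theorem size_le_size_subst {σ : ℕ → Tm} {t : Tm} {x : ℕ} (hx : x ∈ varsL t) :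
    size (σ x) ≤ size (subst σ t) := by
  induction t using induction_on with
  | var y => simp_all
  | app f ts ih =>
    obtain ⟨t, ht, hxt⟩ := List.mem_flatMap.1 (varsL_app f ts ▸ hx)
    rw [subst_app]
    exact (ih t ht hxt).trans (size_lt_size_app_of_mem (List.mem_map_of_mem ht) f).le

/-- The occurs check. -/
theorem not_mem_varsL_of_subst_eq {σ : ℕ → Tm} {x : ℕ} {u : Tm} (h : σ x = subst σ u)
    (hu : u ≠ var x) : x ∉ varsL u := by
  intro hx
  cases u with
  | var y => simp_all [eq_comm]
  | app f ts =>
    obtain ⟨t, ht, hxt⟩ := List.mem_flatMap.1 (varsL_app f ts ▸ hx)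
    have := (size_le_size_subst (σ := σ) hxt).trans_lt
      (size_lt_size_app_of_mem (List.mem_map_of_mem ht) f)
    rw [← subst_app, ← h] at this
    exact this.false

theorem subst_update_var_of_not_mem {x : ℕ} {u t : Tm} (hx : x ∉ varsL t) :
    subst (Function.update var x u) t = t := by
  rw [subst_congr fun y hy => Function.update_of_ne (ne_of_mem_of_not_mem hy hx) u var,
    subst_var_eq_self]

theorem subst_comp_update_var {σ : ℕ → Tm} {x : ℕ} {u : Tm} (h : σ x = subst σ u) :
    subst σ ∘ Function.update var x u = σ := by
  funext y
  by_cases hy : y = x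
  · subst hy; simp [h]
  · simp [hy]

theorem mem_varsL_subst_update_var {x y : ℕ} {u t : Tm}
    (hy : y ∈ varsL (subst (Function.update var x u) t)) :
    y ∈ varsL u ∨ y ∈ varsL t ∧ y ≠ x := by
  obtain ⟨z, hz, hyz⟩ := mem_varsL_subst.1 hy
  by_cases hzx : z = x
  · subst hzx; simp_all
  · simp_all

end Tm

theorem finitary_var : Finitary Tm.var := by
  simp [Finitary]

theorem Finitary.update {σ : ℕ → Tm} (hσ : Finitary σ) (x : ℕ) (u : Tm) :
    Finitary (Function.update σ x u) :=
  (hσ.insert x).subset fun y hy => by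
    by_cases hyx : y = x
    · exact Or.inl hyx
    · exact Or.inr (by simpa [hyx] using hy)

theorem Finitary.comp {σ τ : ℕ → Tm} (hσ : Finitary σ) (hτ : Finitary τ) :
    Finitary (Tm.subst σ ∘ τ) :=
  (hσ.union hτ).subset fun y hy => by
    by_contra h
    simp_all [Finitary]

namespace Tm

abbrev Eqns := List (Tm × Tm)

def UnifiesAll (σ : ℕ → Tm) (E : Eqns) : Prop := ∀ p ∈ E, subst σ p.1 = subst σ p.2

def IsMGUAll (θ : ℕ → Tm) (E : Eqns) : Prop :=
  Finitary θ ∧ UnifiesAll θ E ∧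
    ∀ σ, Finitary σ → UnifiesAll σ E → ∃ ρ, Finitary ρ ∧ ∀ x, σ x = subst ρ (θ x)

def substEqns (σ : ℕ → Tm) (E : Eqns) : Eqns := E.map (Prod.map (subst σ) (subst σ))

section UnifiesAll

variable {σ : ℕ → Tm} {E : Eqns}

theorem unifiesAll_nil : UnifiesAll σ [] := nofun

theorem unifiesAll_cons {p : Tm × Tm} :
    UnifiesAll σ (p :: E) ↔ subst σ p.1 = subst σ p.2 ∧ UnifiesAll σ E :=
  List.forall_mem_cons

theorem unifiesAll_singleton {t u : Tm} : UnifiesAll σ [(t, u)] ↔ Unifies σ t u := by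
  simp [UnifiesAll, Unifies]

theorem unifiesAll_cons_swap {t u : Tm} :
    UnifiesAll σ ((t, u) :: E) ↔ UnifiesAll σ ((u, t) :: E) := by
  simp only [unifiesAll_cons, eq_comm]

theorem unifiesAll_cons_self {t : Tm} : UnifiesAll σ ((t, t) :: E) ↔ UnifiesAll σ E := by
  simp [unifiesAll_cons]

theorem unifiesAll_cons_app {f : ℕ} {ts us : List Tm} (hlen : ts.length = us.length) :
    UnifiesAll σ ((app f ts, app f us) :: E) ↔ UnifiesAll σ (ts.zip us ++ E) := by
  simp [List.map_eq_map_iff_zip, hlen, UnifiesAll, or_imp, forall_and]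

theorem unifiesAll_substEqns {τ : ℕ → Tm} :
    UnifiesAll σ (substEqns τ E) ↔ UnifiesAll (subst σ ∘ τ) E := by
  simp only [UnifiesAll, substEqns, List.forall_mem_map, Prod.map_fst, Prod.map_snd, subst_subst]

theorem unifiesAll_cons_var {x : ℕ} {u : Tm} :
    UnifiesAll σ ((var x, u) :: E) ↔
      σ x = subst σ u ∧ UnifiesAll σ (substEqns (Function.update var x u) E) := by
  rw [unifiesAll_cons, subst_var, unifiesAll_substEqns]
  exact and_congr_right fun h => by rw [subst_comp_update_var h]

end UnifiesAll

theorem isMGUAll_nil : IsMGUAll var [] :=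
  ⟨finitary_var, unifiesAll_nil, fun σ hσ _ => ⟨σ, hσ, by simp⟩⟩

theorem IsMGUAll.of_iff {θ : ℕ → Tm} {E F : Eqns} (hθ : IsMGUAll θ E)
    (h : ∀ σ, UnifiesAll σ E ↔ UnifiesAll σ F) : IsMGUAll θ F :=
  ⟨hθ.1, (h θ).1 hθ.2.1, fun σ hσ hF => hθ.2.2 σ hσ ((h σ).2 hF)⟩

theorem IsMGUAll.cons_var {θ : ℕ → Tm} {E : Eqns} {x : ℕ} {u : Tm}
    (hθ : IsMGUAll θ (substEqns (Function.update var x u) E)) (hx : x ∉ varsL u) :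
    IsMGUAll (subst θ ∘ Function.update var x u) ((var x, u) :: E) := by
  obtain ⟨hθ_fin, hθ_unif, hθ_gen⟩ := hθ
  refine ⟨hθ_fin.comp (finitary_var.update x u), ?_, fun σ hσ hunif => ?_⟩
  · rw [unifiesAll_cons, subst_var, ← unifiesAll_substEqns, ← subst_subst,
      subst_update_var_of_not_mem hx]
    simpa using hθ_unif
  · obtain ⟨hσx, hσE⟩ := unifiesAll_cons_var.1 hunif
    obtain ⟨ρ, hρ, hσρ⟩ := hθ_gen σ hσ hσE
    refine ⟨ρ, hρ, fun y => ?_⟩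
    calc σ y = subst σ (Function.update var x u y) :=
          (congrFun (subst_comp_update_var hσx) y).symm
      _ = subst (subst ρ ∘ θ) (Function.update var x u y) := subst_congr fun z _ => hσρ z
      _ = subst ρ (subst θ (Function.update var x u y)) := (subst_subst ρ θ _).symm

def eqnsVars (E : Eqns) : Finset ℕ := (E.flatMap fun p => p.1.varsL ++ p.2.varsL).toFinset

def eqnsSize (E : Eqns) : ℕ := (E.map fun p => size p.1 + size p.2).sum

section Measure

variable {E : Eqns}

@[simp] theorem mem_eqnsVars {y : ℕ} :
    y ∈ eqnsVars E ↔ ∃ p ∈ E, y ∈ p.1.varsL ∨ y ∈ p.2.varsL := by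
  simp [eqnsVars]

theorem eqnsVars_subset_cons (p : Tm × Tm) : eqnsVars E ⊆ eqnsVars (p :: E) := fun y => by
  simp only [mem_eqnsVars, List.mem_cons]
  exact fun ⟨q, hq, hy⟩ => ⟨q, .inr hq, hy⟩

theorem eqnsVars_cons_swap (t u : Tm) : eqnsVars ((t, u) :: E) = eqnsVars ((u, t) :: E) := by
  ext y
  simp only [mem_eqnsVars, List.mem_cons, exists_eq_or_imp, or_comm (a := y ∈ t.varsL)]

theorem eqnsVars_zip_append_subset (f g : ℕ) (ts us : List Tm) :
    eqnsVars (ts.zip us ++ E) ⊆ eqnsVars ((app f ts, app g us) :: E) := fun y => by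
  simp only [mem_eqnsVars, List.mem_append, List.mem_cons, exists_eq_or_imp, varsL_app,
    List.mem_flatMap]
  rintro ⟨p, hp | hp, hy⟩
  · have ⟨h₁, h₂⟩ := List.of_mem_zip hp
    exact .inl (hy.imp (⟨p.1, h₁, ·⟩) (⟨p.2, h₂, ·⟩))
  · exact .inr ⟨p, hp, hy⟩

theorem card_eqnsVars_substEqns_lt {x : ℕ} {u : Tm} (hx : x ∉ varsL u) :
    (eqnsVars (substEqns (Function.update var x u) E)).card <
      (eqnsVars ((var x, u) :: E)).card := by
  refine (Finset.card_le_card fun y => ?_).trans_lt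
    (Finset.card_erase_lt_of_mem (by simp : x ∈ eqnsVars ((var x, u) :: E)))
  simp only [substEqns, mem_eqnsVars, List.mem_map, exists_exists_and_eq_and, Prod.map_fst,
    Prod.map_snd, Finset.mem_erase, List.mem_cons, exists_eq_or_imp, varsL_var]
  rintro ⟨p, hp, hy⟩
  rcases hy.imp mem_varsL_subst_update_var mem_varsL_subst_update_var with
    (hyu | ⟨hy, hyx⟩) | (hyu | ⟨hy, hyx⟩)
  exacts [⟨ne_of_mem_of_not_mem hyu hx, .inl (.inr hyu)⟩, ⟨hyx, .inr ⟨p, hp, .inl hy⟩⟩,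
    ⟨ne_of_mem_of_not_mem hyu hx, .inl (.inr hyu)⟩, ⟨hyx, .inr ⟨p, hp, .inr hy⟩⟩]

theorem eqnsSize_cons (p : Tm × Tm) : eqnsSize (p :: E) = size p.1 + size p.2 + eqnsSize E := by
  simp [eqnsSize]

theorem eqnsSize_lt_cons (p : Tm × Tm) : eqnsSize E < eqnsSize (p :: E) := by
  have := size_pos p.1
  rw [eqnsSize_cons]
  omega

theorem eqnsSize_zip_le : ∀ ts us : List Tm,
    eqnsSize (ts.zip us) ≤ (ts.map size).sum + (us.map size).sum
  | [], _ | _ :: _, [] => by simp [eqnsSize]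
  | t :: ts, u :: us => by
    have := eqnsSize_zip_le ts us
    simp only [List.zip_cons_cons, eqnsSize_cons, List.map_cons, List.sum_cons]
    omega

theorem eqnsSize_zip_append_lt (f g : ℕ) (ts us : List Tm) :
    eqnsSize (ts.zip us ++ E) < eqnsSize ((app f ts, app g us) :: E) := by
  have := eqnsSize_zip_le ts us
  simp only [eqnsSize_cons, size_app]
  simp only [eqnsSize, List.map_append, List.sum_append] at this ⊢
  omega

end Measure

theorem exists_isMGUAll : ∀ E : Eqns, (∃ σ, Finitary σ ∧ UnifiesAll σ E) → ∃ θ, IsMGUAll θ E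
  | [], _ => ⟨var, isMGUAll_nil⟩
  | (var x, u) :: E, ⟨σ, hσ, hunif⟩ => by
    by_cases hu : u = var x
    · subst hu
      obtain ⟨θ, hθ⟩ := exists_isMGUAll E ⟨σ, hσ, unifiesAll_cons_self.1 hunif⟩
      exact ⟨θ, hθ.of_iff fun _ => unifiesAll_cons_self.symm⟩
    · obtain ⟨hσx, hσE⟩ := unifiesAll_cons_var.1 hunif
      have hx := not_mem_varsL_of_subst_eq hσx hu
      obtain ⟨θ, hθ⟩ := exists_isMGUAll _ ⟨σ, hσ, hσE⟩
      exact ⟨_, hθ.cons_var hx⟩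
  | (app f ts, var x) :: E, ⟨σ, hσ, hunif⟩ => by
    obtain ⟨hσx, hσE⟩ := unifiesAll_cons_var.1 (unifiesAll_cons_swap.1 hunif)
    have hx := not_mem_varsL_of_subst_eq hσx nofun
    obtain ⟨θ, hθ⟩ := exists_isMGUAll _ ⟨σ, hσ, hσE⟩
    exact ⟨_, (hθ.cons_var hx).of_iff fun _ => unifiesAll_cons_swap⟩
  | (app f ts, app g us) :: E, ⟨σ, hσ, hunif⟩ => by
    obtain ⟨rfl, hlen, -⟩ : f = g ∧ ts.length = us.length ∧ _ := by
      simpa [List.map_eq_map_iff_zip] using (unifiesAll_cons.1 hunif).1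
    obtain ⟨θ, hθ⟩ := exists_isMGUAll _ ⟨σ, hσ, (unifiesAll_cons_app hlen).1 hunif⟩
    exact ⟨θ, hθ.of_iff fun _ => (unifiesAll_cons_app hlen).symm⟩
termination_by E => ((eqnsVars E).card, eqnsSize E)
decreasing_by
  · exact Prod.Lex.right' _ (Finset.card_le_card (eqnsVars_subset_cons _)) (eqnsSize_lt_cons _)
  · exact Prod.Lex.left _ _ (card_eqnsVars_substEqns_lt hx)
  · exact Prod.Lex.left _ _
      (eqnsVars_cons_swap (app f ts) (var x) ▸ card_eqnsVars_substEqns_lt hx)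
  · exact Prod.Lex.right' _ (Finset.card_le_card (eqnsVars_zip_append_subset _ _ _ _))
      (eqnsSize_zip_append_lt _ _ _ _)

end Tm

/-- if two terms are unifiable (by a finitary substitution), then
they have a most general unifier. -/
theorem mgu_exists (t u : Tm) (h : ∃ σ, Finitary σ ∧ Unifies σ t u) :
    ∃ θ, IsMGU θ t u := by
  obtain ⟨σ, hσ, hunif⟩ := h
  obtain ⟨θ, hθ_fin, hθ_unif, hθ_gen⟩ :=
    Tm.exists_isMGUAll [(t, u)] ⟨σ, hσ, Tm.unifiesAll_singleton.2 hunif⟩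
  exact ⟨θ, hθ_fin, Tm.unifiesAll_singleton.1 hθ_unif,
    fun σ hσ hunif => hθ_gen σ hσ (Tm.unifiesAll_singleton.2 hunif)⟩
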